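/- Let L be a multiple of 4 and consider the I^(4) model on the torus of side L: the 2×2-block spin model on (Z/LZ)² whose blocks carry the 4 zero-energy zero-magnetization configurations, with Hamiltonian H^(4)(S) = ∑_{<α,β>} w(S_α,S_β) given by the nearest-neighbor Ising interaction between adjacent blocks. Then the partition function satisfies Z_{I^(4),L}(β) = Z_{Ising,L/2}(β)², where Z_{Ising,L/2}(β) is the partition function of the standard nearest-neighbor zero-field Ising model on the torus of side L/2 with periodic boundary conditions. -/
import Mathlib


/-- The spin value of a Boolean: `true ↦ +1`, `false ↦ −1`. -/
def spin (b : Bool) : ℤ := if b then 1 else -1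

/-- The zero-field nearest-neighbor Ising energy on the torus `(ℤ/n)²`
(periodic boundary conditions): `H(σ) = −∑_{<x,y>} σ_x σ_y`. -/
def torusEnergy (n : ℕ) [NeZero n] (σ : ZMod n × ZMod n → Bool) : ℤ :=
  -∑ v : ZMod n × ZMod n,
    (spin (σ v) * spin (σ (v + (1, 0))) + spin (σ v) * spin (σ (v + (0, 1))))

/-- The Ising partition function on the torus of side `n`. -/
noncomputable def isingZ (n : ℕ) [NeZero n] (β : ℝ) : ℝ :=
  ∑ σ : ZMod n × ZMod n → Bool, Real.exp (-β * (torusEnergy n σ : ℝ))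

/-- The lower-left corner of the `p`-th block of the fixed partition of the torus of
side `L` into 2×2 blocks. -/
def blockCorner (L : ℕ) (p : Fin (L / 2) × Fin (L / 2)) : ZMod L × ZMod L :=
  (((2 * p.1.1 : ℕ) : ZMod L), ((2 * p.2.1 : ℕ) : ZMod L))

/-- The `I⁽⁴⁾` constraint: each 2×2 block of the fixed partition has a configuration of
the form `[[σ₁,σ₂],[−σ₂,−σ₁]]`. -/
def P4 (L : ℕ) (σ : ZMod L × ZMod L → Bool) : Prop :=
  ∀ p : Fin (L / 2) × Fin (L / 2),
    σ (blockCorner L p + (0, 1)) = ! σ (blockCorner L p + (1, 0)) ∧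
    σ (blockCorner L p + (1, 1)) = ! σ (blockCorner L p)

instance (L : ℕ) : DecidablePred (P4 L) := fun σ => by
  unfold P4; infer_instance

/-- The partition function of the `I⁽⁴⁾` model on the torus of side `L`. -/
noncomputable def z4 (L : ℕ) [NeZero L] (β : ℝ) : ℝ :=
  ∑ σ : {σ : ZMod L × ZMod L → Bool // P4 L σ}, Real.exp (-β * (torusEnergy L σ.1 : ℝ))

namespace Stmt9

/-! Auxiliary development: the block relabeling `φ` decoupling the `I⁽⁴⁾` model
into two independent Ising models on the half-size torus. -/

def flp (k : ℕ) (x : Bool) : Bool := xor (decide (k % 2 = 1)) x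

lemma flp_flp (k : ℕ) (x : Bool) : flp k (flp k x) = x := by
  rcases Nat.mod_two_eq_zero_or_one k with h | h <;> simp [flp, h]

lemma flp_succ (k : ℕ) (x : Bool) : flp (k + 1) x = ! flp k x := by
  rcases Nat.mod_two_eq_zero_or_one k with h | h <;>
    simp [flp, Nat.add_mod, h]

def raw (M : ℕ) (ρ τ : ZMod M × ZMod M → Bool) (n m : ℕ) : Bool :=
  flp (m + m / 2)
    (if (n / 2 + m / 2 + n + m) % 2 = 0
      then ρ (((n / 2 : ℕ) : ZMod M), ((m / 2 : ℕ) : ZMod M))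
      else τ (((n / 2 : ℕ) : ZMod M), ((m / 2 : ℕ) : ZMod M)))

def psi (M L : ℕ) (ρ τ : ZMod M × ZMod M → Bool) : ZMod L × ZMod L → Bool :=
  fun v => raw M ρ τ v.1.val v.2.val

lemma mod_eval {α : Sort*} (f : ℕ → α) (T : ℕ) (hT : 0 < T) (hf : ∀ n, f (n + T) = f n) :
    ∀ n, f (n % T) = f n := by
  intro n
  induction n using Nat.strong_induction_on with
  | _ n ih =>
    rcases lt_or_ge n T with h | h
    · rw [Nat.mod_eq_of_lt h]
    · have e : n = (n - T) + T := by omega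
      rw [e, hf, Nat.add_mod_right]
      exact ih _ (by omega)

lemma raw_add_left (M : ℕ) (ρ τ : ZMod M × ZMod M → Bool) (hM : M % 2 = 0) (n m : ℕ) :
    raw M ρ τ (n + 2 * M) m = raw M ρ τ n m := by
  unfold raw
  rw [show (n + 2 * M) / 2 = n / 2 + M by omega,
    show (n / 2 + M + m / 2 + (n + 2 * M) + m) % 2 = (n / 2 + m / 2 + n + m) % 2 by omega]
  simp [ZMod.natCast_self]

lemma raw_add_right (M : ℕ) (ρ τ : ZMod M × ZMod M → Bool) (hM : M % 2 = 0) (n m : ℕ) :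
    raw M ρ τ n (m + 2 * M) = raw M ρ τ n m := by
  unfold raw
  rw [show (m + 2 * M) / 2 = m / 2 + M by omega,
    show (n / 2 + (m / 2 + M) + n + (m + 2 * M)) % 2 = (n / 2 + m / 2 + n + m) % 2 by omega]
  have h3 : flp (m + 2 * M + (m / 2 + M)) = flp (m + m / 2) := by
    funext x; unfold flp; rw [show (m + 2 * M + (m / 2 + M)) % 2 = (m + m / 2) % 2 by omega]
  rw [h3]
  simp [ZMod.natCast_self]

lemma psi_eval (M L : ℕ) [NeZero L] (hLM : L = 2 * M) (hM : M % 2 = 0)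
    (ρ τ : ZMod M × ZMod M → Bool) (n m : ℕ) :
    psi M L ρ τ (((n : ℕ) : ZMod L), ((m : ℕ) : ZMod L)) = raw M ρ τ n m := by
  subst hLM
  have hL : 0 < 2 * M := Nat.pos_of_ne_zero (NeZero.ne _)
  show raw M ρ τ ((n : ZMod (2 * M))).val ((m : ZMod (2 * M))).val = _
  rw [ZMod.val_natCast, ZMod.val_natCast,
    mod_eval (fun k => raw M ρ τ k (m % (2 * M))) (2 * M) hL
      (fun k => raw_add_left M ρ τ hM k _) n,
    mod_eval (fun k => raw M ρ τ n k) (2 * M) hL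
      (fun k => raw_add_right M ρ τ hM n k) m]

variable (M : ℕ) (ρ τ : ZMod M × ZMod M → Bool)

lemma re00 (a b : ℕ) : raw M ρ τ (2 * a) (2 * b) =
    flp b (if (a + b) % 2 = 0 then ρ (↑a, ↑b) else τ (↑a, ↑b)) := by
  unfold raw
  rw [show (2 * a) / 2 = a by omega, show (2 * b) / 2 = b by omega,
    show (a + b + 2 * a + 2 * b) % 2 = (a + b) % 2 by omega,
    show flp (2 * b + b) = flp b from by funext x; unfold flp; rw [show (2*b+b) % 2 = b % 2 by omega]]

lemma re10 (a b : ℕ) : raw M ρ τ (2 * a + 1) (2 * b) =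
    flp b (if (a + b + 1) % 2 = 0 then ρ (↑a, ↑b) else τ (↑a, ↑b)) := by
  unfold raw
  rw [show (2 * a + 1) / 2 = a by omega, show (2 * b) / 2 = b by omega,
    show (a + b + (2 * a + 1) + 2 * b) % 2 = (a + b + 1) % 2 by omega,
    show flp (2 * b + b) = flp b from by funext x; unfold flp; rw [show (2*b+b) % 2 = b % 2 by omega]]

lemma re01 (a b : ℕ) : raw M ρ τ (2 * a) (2 * b + 1) =
    flp (b + 1) (if (a + b + 1) % 2 = 0 then ρ (↑a, ↑b) else τ (↑a, ↑b)) := by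
  unfold raw
  rw [show (2 * a) / 2 = a by omega, show (2 * b + 1) / 2 = b by omega,
    show (a + b + 2 * a + (2 * b + 1)) % 2 = (a + b + 1) % 2 by omega,
    show flp (2 * b + 1 + b) = flp (b + 1) from by
      funext x; unfold flp; rw [show (2*b+1+b) % 2 = (b+1) % 2 by omega]]

lemma re11 (a b : ℕ) : raw M ρ τ (2 * a + 1) (2 * b + 1) =
    flp (b + 1) (if (a + b) % 2 = 0 then ρ (↑a, ↑b) else τ (↑a, ↑b)) := by
  unfold raw
  rw [show (2 * a + 1) / 2 = a by omega, show (2 * b + 1) / 2 = b by omega,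
    show (a + b + (2 * a + 1) + (2 * b + 1)) % 2 = (a + b) % 2 by omega,
    show flp (2 * b + 1 + b) = flp (b + 1) from by
      funext x; unfold flp; rw [show (2*b+1+b) % 2 = (b+1) % 2 by omega]]

lemma psi_P4 (L : ℕ) [NeZero L] (hLM : L = 2 * M) (hM : M % 2 = 0) :
    P4 L (psi M L ρ τ) := by
  intro p
  have c01 : blockCorner L p + ((0 : ZMod L), (1 : ZMod L)) =
      (((2 * p.1.1 : ℕ) : ZMod L), ((2 * p.2.1 + 1 : ℕ) : ZMod L)) := by
    unfold blockCorner
    rw [Prod.mk_add_mk]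
    simp only [Prod.mk.injEq]
    constructor <;> push_cast <;> ring
  have c10 : blockCorner L p + ((1 : ZMod L), (0 : ZMod L)) =
      (((2 * p.1.1 + 1 : ℕ) : ZMod L), ((2 * p.2.1 : ℕ) : ZMod L)) := by
    unfold blockCorner
    rw [Prod.mk_add_mk]
    simp only [Prod.mk.injEq]
    constructor <;> push_cast <;> ring
  have c11 : blockCorner L p + ((1 : ZMod L), (1 : ZMod L)) =
      (((2 * p.1.1 + 1 : ℕ) : ZMod L), ((2 * p.2.1 + 1 : ℕ) : ZMod L)) := by
    unfold blockCorner
    rw [Prod.mk_add_mk]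
    simp only [Prod.mk.injEq]
    constructor <;> push_cast <;> ring
  have c00 : blockCorner L p =
      (((2 * p.1.1 : ℕ) : ZMod L), ((2 * p.2.1 : ℕ) : ZMod L)) := rfl
  constructor
  · rw [c01, c10, psi_eval M L hLM hM, psi_eval M L hLM hM, re01, re10, flp_succ]
  · rw [c11, c00, psi_eval M L hLM hM, psi_eval M L hLM hM, re11, re00, flp_succ]

def ext1 (L : ℕ) (σ : ZMod L × ZMod L → Bool) : ZMod M × ZMod M → Bool :=
  fun p => flp p.2.val (if (p.1.val + p.2.val) % 2 = 0
    then σ (((2 * p.1.val : ℕ) : ZMod L), ((2 * p.2.val : ℕ) : ZMod L))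
    else σ (((2 * p.1.val + 1 : ℕ) : ZMod L), ((2 * p.2.val : ℕ) : ZMod L)))

def ext2 (L : ℕ) (σ : ZMod L × ZMod L → Bool) : ZMod M × ZMod M → Bool :=
  fun p => flp p.2.val (if (p.1.val + p.2.val) % 2 = 0
    then σ (((2 * p.1.val + 1 : ℕ) : ZMod L), ((2 * p.2.val : ℕ) : ZMod L))
    else σ (((2 * p.1.val : ℕ) : ZMod L), ((2 * p.2.val : ℕ) : ZMod L)))

lemma cast_val_pair [NeZero M] (p : ZMod M × ZMod M) :
    (((p.1.val : ℕ) : ZMod M), ((p.2.val : ℕ) : ZMod M)) = p := by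
  simp [Prod.ext_iff, ZMod.natCast_val, ZMod.cast_id]

lemma ext1_psi (L : ℕ) [NeZero L] [NeZero M] (hLM : L = 2 * M) (hM : M % 2 = 0) :
    ext1 M L (psi M L ρ τ) = ρ := by
  funext p
  show flp p.2.val _ = _
  rw [psi_eval M L hLM hM, psi_eval M L hLM hM, re00, re10]
  rcases Nat.mod_two_eq_zero_or_one (p.1.val + p.2.val) with h | h
  · rw [if_pos h, if_pos h, flp_flp, cast_val_pair]
  · rw [if_neg (by omega), if_pos (by omega), flp_flp, cast_val_pair]

lemma ext2_psi (L : ℕ) [NeZero L] [NeZero M] (hLM : L = 2 * M) (hM : M % 2 = 0) :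
    ext2 M L (psi M L ρ τ) = τ := by
  funext p
  show flp p.2.val _ = _
  rw [psi_eval M L hLM hM, psi_eval M L hLM hM, re00, re10]
  rcases Nat.mod_two_eq_zero_or_one (p.1.val + p.2.val) with h | h
  · rw [if_pos h, if_neg (by omega), flp_flp, cast_val_pair]
  · rw [if_neg (by omega), if_neg (by omega), flp_flp, cast_val_pair]

lemma psi_ext (L : ℕ) [NeZero L] (hLM : L = 2 * M) (hM : M % 2 = 0)
    (σ : ZMod L × ZMod L → Bool) (hσ : P4 L σ) :
    psi M L (ext1 M L σ) (ext2 M L σ) = σ := by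
  funext v
  obtain ⟨x, y⟩ := v
  have hx : ((x.val : ℕ) : ZMod L) = x := by simp [ZMod.natCast_val, ZMod.cast_id]
  have hy : ((y.val : ℕ) : ZMod L) = y := by simp [ZMod.natCast_val, ZMod.cast_id]
  have hnL : x.val < L := ZMod.val_lt x
  have hmL : y.val < L := ZMod.val_lt y
  set n := x.val with hn
  set m := y.val with hm
  have ha : n / 2 < M := by omega
  have hb : m / 2 < M := by omega
  set a := n / 2 with hadef
  set b := m / 2 with hbdef
  obtain ⟨h1, h2⟩ := hσ (⟨a, by omega⟩, ⟨b, by omega⟩)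
  have c00 : blockCorner L (⟨a, by omega⟩, ⟨b, by omega⟩) =
      (((2 * a : ℕ) : ZMod L), ((2 * b : ℕ) : ZMod L)) := rfl
  have c01 : blockCorner L (⟨a, by omega⟩, ⟨b, by omega⟩) + ((0 : ZMod L), (1 : ZMod L)) =
      (((2 * a : ℕ) : ZMod L), ((2 * b + 1 : ℕ) : ZMod L)) := by
    rw [c00, Prod.mk_add_mk]
    simp only [Prod.mk.injEq]
    constructor <;> push_cast <;> ring
  have c10 : blockCorner L (⟨a, by omega⟩, ⟨b, by omega⟩) + ((1 : ZMod L), (0 : ZMod L)) =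
      (((2 * a + 1 : ℕ) : ZMod L), ((2 * b : ℕ) : ZMod L)) := by
    rw [c00, Prod.mk_add_mk]
    simp only [Prod.mk.injEq]
    constructor <;> push_cast <;> ring
  have c11 : blockCorner L (⟨a, by omega⟩, ⟨b, by omega⟩) + ((1 : ZMod L), (1 : ZMod L)) =
      (((2 * a + 1 : ℕ) : ZMod L), ((2 * b + 1 : ℕ) : ZMod L)) := by
    rw [c00, Prod.mk_add_mk]
    simp only [Prod.mk.injEq]
    constructor <;> push_cast <;> ring
  rw [c01, c10] at h1
  rw [c11, c00] at h2
  have va : ((a : ZMod M)).val = a := ZMod.val_cast_of_lt ha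
  have vb : ((b : ZMod M)).val = b := ZMod.val_cast_of_lt hb
  have e1 : ext1 M L σ (↑a, ↑b) = flp b (if (a + b) % 2 = 0
      then σ (((2 * a : ℕ) : ZMod L), ((2 * b : ℕ) : ZMod L))
      else σ (((2 * a + 1 : ℕ) : ZMod L), ((2 * b : ℕ) : ZMod L))) := by
    show flp ((b : ZMod M)).val _ = _
    rw [va, vb]
  have e2 : ext2 M L σ (↑a, ↑b) = flp b (if (a + b) % 2 = 0
      then σ (((2 * a + 1 : ℕ) : ZMod L), ((2 * b : ℕ) : ZMod L))
      else σ (((2 * a : ℕ) : ZMod L), ((2 * b : ℕ) : ZMod L))) := by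
    show flp ((b : ZMod M)).val _ = _
    rw [va, vb]
  rw [← hx, ← hy, psi_eval M L hLM hM]
  have hi : n % 2 = 0 ∨ n % 2 = 1 := Nat.mod_two_eq_zero_or_one n
  have hj : m % 2 = 0 ∨ m % 2 = 1 := Nat.mod_two_eq_zero_or_one m
  rcases hi with hi | hi <;> rcases hj with hj | hj
  · rw [show n = 2 * a from by omega, show m = 2 * b from by omega, re00, e1, e2]
    rcases Nat.mod_two_eq_zero_or_one (a + b) with h | h
    · rw [if_pos h, if_pos h, flp_flp]
    · rw [if_neg (by omega), if_neg (by omega), flp_flp]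
  · rw [show n = 2 * a from by omega, show m = 2 * b + 1 from by omega, re01, e1, e2,
      flp_succ]
    rcases Nat.mod_two_eq_zero_or_one (a + b) with h | h
    · rw [if_neg (by omega), if_pos h, flp_flp, h1]
    · rw [if_pos (by omega), if_neg (by omega), flp_flp, h1]
  · rw [show n = 2 * a + 1 from by omega, show m = 2 * b from by omega, re10, e1, e2]
    rcases Nat.mod_two_eq_zero_or_one (a + b) with h | h
    · rw [if_neg (by omega), if_pos h, flp_flp]
    · rw [if_pos (by omega), if_neg (by omega), flp_flp]
  · rw [show n = 2 * a + 1 from by omega, show m = 2 * b + 1 from by omega, re11, e1, e2,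
      flp_succ]
    rcases Nat.mod_two_eq_zero_or_one (a + b) with h | h
    · rw [if_pos h, if_pos h, flp_flp, h2]
    · rw [if_neg (by omega), if_neg (by omega), flp_flp, h2]

lemma zmod_sum {α : Type*} [AddCommMonoid α] (n : ℕ) [NeZero n] (F : ZMod n → α) :
    ∑ v : ZMod n, F v = ∑ i ∈ Finset.range n, F ↑i := by
  rw [← Fin.sum_univ_eq_sum_range (fun i => F ↑i) n]
  refine (Fintype.sum_bijective (fun i : Fin n => ((i : ℕ) : ZMod n)) ⟨?_, ?_⟩ _ _
    (fun i => rfl)).symm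
  · intro i j h
    have := congrArg ZMod.val h
    rwa [ZMod.val_natCast, ZMod.val_natCast, Nat.mod_eq_of_lt i.2, Nat.mod_eq_of_lt j.2,
      ← Fin.ext_iff] at this
  · intro v
    exact ⟨⟨v.val, ZMod.val_lt v⟩, by simp [ZMod.natCast_val, ZMod.cast_id]⟩

lemma torusEnergy_eq (n : ℕ) [NeZero n] (c : ZMod n × ZMod n → Bool) :
    torusEnergy n c = -∑ a ∈ Finset.range n, ∑ b ∈ Finset.range n,
      (spin (c (↑a, ↑b)) * spin (c (↑(a + 1), ↑b)) +
       spin (c (↑a, ↑b)) * spin (c (↑a, ↑(b + 1)))) := by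
  unfold torusEnergy
  congr 1
  rw [Fintype.sum_prod_type, zmod_sum]
  refine Finset.sum_congr rfl fun a _ => ?_
  rw [zmod_sum]
  refine Finset.sum_congr rfl fun b _ => ?_
  have e1 : ((↑a, ↑b) : ZMod n × ZMod n) + ((1 : ZMod n), (0 : ZMod n)) = (↑(a + 1), ↑b) := by
    rw [Prod.mk_add_mk]
    simp only [Prod.mk.injEq]
    constructor <;> push_cast <;> ring
  have e2 : ((↑a, ↑b) : ZMod n × ZMod n) + ((0 : ZMod n), (1 : ZMod n)) = (↑a, ↑(b + 1)) := by
    rw [Prod.mk_add_mk]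
    simp only [Prod.mk.injEq]
    constructor <;> push_cast <;> ring
  rw [e1, e2]

lemma sum_range_two {α : Type*} [AddCommMonoid α] (g : ℕ → α) (M : ℕ) :
    ∑ n ∈ Finset.range (2 * M), g n = ∑ p ∈ Finset.range M, (g (2 * p) + g (2 * p + 1)) := by
  induction M with
  | zero => simp
  | succ k ih =>
    rw [show 2 * (k + 1) = 2 * k + 1 + 1 by ring, Finset.sum_range_succ, Finset.sum_range_succ,
      ih, Finset.sum_range_succ, add_assoc]

def bd (n m : ℕ) : ℤ :=
  spin (raw M ρ τ n m) * spin (raw M ρ τ (n + 1) m) +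
  spin (raw M ρ τ n m) * spin (raw M ρ τ n (m + 1))

lemma blockId (a b : ℕ) :
    bd M ρ τ (2 * a) (2 * b) + bd M ρ τ (2 * a) (2 * b + 1) +
      (bd M ρ τ (2 * a + 1) (2 * b) + bd M ρ τ (2 * a + 1) (2 * b + 1)) =
    (spin (ρ (↑a, ↑b)) * spin (ρ (↑(a + 1), ↑b)) +
     spin (ρ (↑a, ↑b)) * spin (ρ (↑a, ↑(b + 1)))) +
    (spin (τ (↑a, ↑b)) * spin (τ (↑(a + 1), ↑b)) +
     spin (τ (↑a, ↑b)) * spin (τ (↑a, ↑(b + 1)))) := by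
  unfold bd
  rw [show 2 * a + 1 + 1 = 2 * (a + 1) by ring, show 2 * b + 1 + 1 = 2 * (b + 1) by ring]
  rw [re00, re10, re01, re11, re00 M ρ τ (a+1) b, re01 M ρ τ (a+1) b,
    re00 M ρ τ a (b+1), re10 M ρ τ a (b+1)]
  have hc1 : ∀ x y : Bool, (if (a + b + 1) % 2 = 0 then x else y) =
      (if (a + b) % 2 = 0 then y else x) := by
    intro x y
    rcases Nat.mod_two_eq_zero_or_one (a + b) with h | h
    · rw [if_neg (by omega), if_pos h]
    · rw [if_pos (by omega), if_neg (by omega)]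
  have hc2 : ∀ x y : Bool, (if (a + 1 + b) % 2 = 0 then x else y) =
      (if (a + b) % 2 = 0 then y else x) := by
    intro x y
    rcases Nat.mod_two_eq_zero_or_one (a + b) with h | h
    · rw [if_neg (by omega), if_pos h]
    · rw [if_pos (by omega), if_neg (by omega)]
  have hc3 : ∀ x y : Bool, (if (a + 1 + b + 1) % 2 = 0 then x else y) =
      (if (a + b) % 2 = 0 then x else y) := by
    intro x y
    rcases Nat.mod_two_eq_zero_or_one (a + b) with h | h
    · rw [if_pos (by omega), if_pos h]
    · rw [if_neg (by omega), if_neg (by omega)]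
  have hc4 : ∀ x y : Bool, (if (a + (b + 1)) % 2 = 0 then x else y) =
      (if (a + b) % 2 = 0 then y else x) := by
    intro x y
    rcases Nat.mod_two_eq_zero_or_one (a + b) with h | h
    · rw [if_neg (by omega), if_pos h]
    · rw [if_pos (by omega), if_neg (by omega)]
  have hc5 : ∀ x y : Bool, (if (a + (b + 1) + 1) % 2 = 0 then x else y) =
      (if (a + b) % 2 = 0 then x else y) := by
    intro x y
    rcases Nat.mod_two_eq_zero_or_one (a + b) with h | h
    · rw [if_pos (by omega), if_pos h]
    · rw [if_neg (by omega), if_neg (by omega)]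
  simp only [flp_succ, hc1, hc2, hc3, hc4, hc5]
  rcases Nat.mod_two_eq_zero_or_one (a + b) with h | h <;>
    simp only [h, if_pos (rfl : (0:ℕ) = 0), if_neg (by omega : ¬ (1:ℕ) = 0)] <;>
    unfold flp <;>
    generalize decide (b % 2 = 1) = f <;>
    cases f <;>
      cases ρ ((a : ZMod M), (b : ZMod M)) <;>
      cases τ ((a : ZMod M), (b : ZMod M)) <;>
      cases ρ (((a+1 : ℕ) : ZMod M), (b : ZMod M)) <;>
      cases τ (((a+1 : ℕ) : ZMod M), (b : ZMod M)) <;>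
      cases ρ ((a : ZMod M), ((b+1 : ℕ) : ZMod M)) <;>
      cases τ ((a : ZMod M), ((b+1 : ℕ) : ZMod M)) <;>
      decide

lemma psi_energy (L : ℕ) [NeZero L] [NeZero M] (hLM : L = 2 * M) (hM : M % 2 = 0) :
    torusEnergy L (psi M L ρ τ) = torusEnergy M ρ + torusEnergy M τ := by
  have key : ∀ n m : ℕ,
      (spin (psi M L ρ τ (↑n, ↑m)) * spin (psi M L ρ τ (↑(n + 1), ↑m)) +
       spin (psi M L ρ τ (↑n, ↑m)) * spin (psi M L ρ τ (↑n, ↑(m + 1)))) = bd M ρ τ n m := by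
    intro n m
    unfold bd
    rw [psi_eval M L hLM hM, psi_eval M L hLM hM, psi_eval M L hLM hM]
  rw [torusEnergy_eq L, torusEnergy_eq M, torusEnergy_eq M, ← neg_add, ← Finset.sum_add_distrib]
  congr 1
  calc ∑ n ∈ Finset.range L, ∑ m ∈ Finset.range L,
        (spin (psi M L ρ τ (↑n, ↑m)) * spin (psi M L ρ τ (↑(n + 1), ↑m)) +
         spin (psi M L ρ τ (↑n, ↑m)) * spin (psi M L ρ τ (↑n, ↑(m + 1))))
      = ∑ n ∈ Finset.range (2 * M), ∑ m ∈ Finset.range (2 * M), bd M ρ τ n m := by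
        rw [← hLM]
        exact Finset.sum_congr rfl fun n _ => Finset.sum_congr rfl fun m _ => key n m
    _ = ∑ x ∈ Finset.range M, ∑ y ∈ Finset.range M,
          (bd M ρ τ (2 * x) (2 * y) + bd M ρ τ (2 * x) (2 * y + 1) +
           (bd M ρ τ (2 * x + 1) (2 * y) + bd M ρ τ (2 * x + 1) (2 * y + 1))) := by
        rw [sum_range_two (fun n => ∑ m ∈ Finset.range (2 * M), bd M ρ τ n m) M]
        refine Finset.sum_congr rfl fun x _ => ?_
        rw [sum_range_two (fun m => bd M ρ τ (2 * x) m) M,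
          sum_range_two (fun m => bd M ρ τ (2 * x + 1) m) M, ← Finset.sum_add_distrib]
    _ = ∑ x ∈ Finset.range M, ∑ y ∈ Finset.range M,
          ((spin (ρ (↑x, ↑y)) * spin (ρ (↑(x + 1), ↑y)) +
            spin (ρ (↑x, ↑y)) * spin (ρ (↑x, ↑(y + 1)))) +
           (spin (τ (↑x, ↑y)) * spin (τ (↑(x + 1), ↑y)) +
            spin (τ (↑x, ↑y)) * spin (τ (↑x, ↑(y + 1))))) :=
        Finset.sum_congr rfl fun x _ => Finset.sum_congr rfl fun y _ => blockId M ρ τ x y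
    _ = _ := Finset.sum_congr rfl fun x _ => Finset.sum_add_distrib

def blockEquiv (L : ℕ) [NeZero L] [NeZero M] (hLM : L = 2 * M) (hM : M % 2 = 0) :
    ((ZMod M × ZMod M → Bool) × (ZMod M × ZMod M → Bool)) ≃
      {σ : ZMod L × ZMod L → Bool // P4 L σ} where
  toFun := fun rt => ⟨psi M L rt.1 rt.2, psi_P4 M rt.1 rt.2 L hLM hM⟩
  invFun := fun s => (ext1 M L s.1, ext2 M L s.1)
  left_inv := fun rt => by
    simp only
    rw [ext1_psi M rt.1 rt.2 L hLM hM, ext2_psi M rt.1 rt.2 L hLM hM]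
  right_inv := fun s => Subtype.ext (psi_ext M L hLM hM s.1 s.2)

end Stmt9

/-- For `L` a multiple of 4, the partition function of the `I⁽⁴⁾` model on the torus of
side `L` equals the square of the Ising partition function on the torus of side `L/2`. -/
theorem stmt9 (L : ℕ) [NeZero L] [NeZero (L / 2)] (hL : 4 ∣ L) (β : ℝ) :
    z4 L β = (isingZ (L / 2) β) ^ 2 := by
  obtain ⟨k, hk⟩ := hL
  have hLM : L = 2 * (L / 2) := by omega
  have hM : (L / 2) % 2 = 0 := by omega
  unfold z4 isingZ
  rw [← Equiv.sum_comp (Stmt9.blockEquiv (L / 2) L hLM hM)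
    (fun s : {σ : ZMod L × ZMod L → Bool // P4 L σ} =>
      Real.exp (-β * ((torusEnergy L s.1 : ℤ) : ℝ)))]
  rw [Fintype.sum_prod_type, sq, Finset.sum_mul_sum]
  refine Finset.sum_congr rfl fun r _ => Finset.sum_congr rfl fun t _ => ?_
  show Real.exp (-β * ((torusEnergy L (Stmt9.psi (L / 2) L r t) : ℤ) : ℝ)) = _
  rw [Stmt9.psi_energy (L / 2) r t L hLM hM, ← Real.exp_add]
  congr 1
  push_cast
  ring
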